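/- arXiv:1003.3621 — 3 statements merged into one kernel-verified Lean document; each statement's English description precedes it below -/
import Mathlib

section
/- Let N ≥ 2, ω = exp(2πi/N), and let k be an integer with 0 ≤ k ≤ N-1. Then ∑_{j=1}^{N-1} ω^{kj}/(1 - ω^{-j}) = (N - 1 - 2k)/2. -/
/-!
Writing `z = ω ^ j ≠ 1`, we have
`z ^ k / (1 - z⁻¹) = z ^ (k + 1) / (z - 1) = ∑_{i ≤ k} z ^ i + 1 / (z - 1)`.
Summed over `j`, the geometric part gives `(N - 1) - k`, since `∑_{j=1}^{N-1} ω ^ (i j) = -1`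
for `0 < i < N`. The remaining sum `∑_j 1 / (ω ^ j - 1)` equals `-(N - 1) / 2`, because the
substitution `j ↦ N - j` inverts `ω ^ j` and `1 / (z - 1) + 1 / (z⁻¹ - 1) = -1`.
-/

open Finset

variable {K : Type*} [Field K]

lemma one_div_sub_one_add_one_div_inv_sub_one {z : K} (hz0 : z ≠ 0) (hz1 : z ≠ 1) :
    1 / (z - 1) + 1 / (z⁻¹ - 1) = -1 := by
  have hz1' : z - 1 ≠ 0 := sub_ne_zero_of_ne hz1
  have hz1'' : 1 - z ≠ 0 := sub_ne_zero_of_ne hz1.symm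
  field_simp
  ring

lemma pow_div_one_sub_inv_eq_geom_sum_add {z : K} (hz0 : z ≠ 0) (hz1 : z ≠ 1) (k : ℕ) :
    z ^ k / (1 - z⁻¹) = ∑ i ∈ range (k + 1), z ^ i + 1 / (z - 1) := by
  have hz1' : z - 1 ≠ 0 := sub_ne_zero_of_ne hz1
  rw [geom_sum_eq hz1]
  field_simp
  ring

lemma geom_sum_eq_zero_of_pow_eq_one {z : K} {n : ℕ} (hzn : z ^ n = 1) (hz1 : z ≠ 1) :
    ∑ i ∈ range n, z ^ i = 0 := by
  rw [geom_sum_eq hz1, hzn, sub_self, zero_div]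

namespace IsPrimitiveRoot

variable {ζ : K} {N : ℕ}

lemma sum_range_pow_mul_eq_zero (h : IsPrimitiveRoot ζ N) {i : ℕ} (hi : ¬ N ∣ i) :
    ∑ j ∈ range N, ζ ^ (i * j) = 0 := by
  simp only [pow_mul]
  refine geom_sum_eq_zero_of_pow_eq_one ?_ ((h.pow_eq_one_iff_dvd i).not.mpr hi)
  rw [← pow_mul, mul_comm, pow_mul, h.pow_eq_one, one_pow]

lemma sum_Ico_one_pow_mul_eq_neg_one (h : IsPrimitiveRoot ζ N) {i : ℕ} (hi0 : 0 < i)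
    (hiN : i < N) : ∑ j ∈ Ico 1 N, ζ ^ (i * j) = -1 := by
  have hsum := h.sum_range_pow_mul_eq_zero (Nat.not_dvd_of_pos_of_lt hi0 hiN)
  rw [range_eq_Ico, sum_eq_sum_Ico_succ_bot (hi0.trans hiN)] at hsum
  simpa using eq_neg_of_add_eq_zero_right hsum

lemma two_mul_sum_Ico_one_div_pow_sub_one (h : IsPrimitiveRoot ζ N) (hN : 0 < N) :
    2 * ∑ j ∈ Ico 1 N, 1 / (ζ ^ j - 1) = 1 - N := by
  have hζ0 : ζ ≠ 0 := h.ne_zero hN.ne'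
  have hreflect :
      ∑ j ∈ Ico 1 N, 1 / (ζ ^ (N - j) - 1) = ∑ j ∈ Ico 1 N, 1 / (ζ ^ j - 1) := by
    rw [sum_Ico_reflect (fun j => 1 / (ζ ^ j - 1)) 1 (Nat.le_succ N)]
    simp
  have hpair : ∀ j ∈ Ico 1 N, 1 / (ζ ^ j - 1) + 1 / (ζ ^ (N - j) - 1) = -1 := by
    intro j hj
    obtain ⟨hj1, hjN⟩ := mem_Ico.mp hj
    rw [pow_sub₀ _ hζ0 hjN.le, h.pow_eq_one, one_mul]
    exact one_div_sub_one_add_one_div_inv_sub_one (pow_ne_zero _ hζ0)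
      (h.pow_ne_one_of_pos_of_lt (Nat.one_le_iff_ne_zero.mp hj1) hjN)
  calc 2 * ∑ j ∈ Ico 1 N, 1 / (ζ ^ j - 1)
      = ∑ j ∈ Ico 1 N, (1 / (ζ ^ j - 1) + 1 / (ζ ^ (N - j) - 1)) := by
        rw [sum_add_distrib, hreflect, two_mul]
    _ = 1 - N := by
        rw [sum_congr rfl hpair, sum_const, Nat.card_Ico, nsmul_eq_mul, Nat.cast_sub hN]
        ring

lemma two_mul_sum_pow_mul_div_one_sub_zpow_neg (h : IsPrimitiveRoot ζ N) {k : ℕ} (hk : k < N) :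
    2 * ∑ j ∈ Ico 1 N, ζ ^ (k * j) / (1 - ζ ^ (-(j : ℤ))) = N - 1 - 2 * k := by
  have hN : 0 < N := k.zero_le.trans_lt hk
  have hζ0 : ζ ≠ 0 := h.ne_zero hN.ne'
  have hterm : ∀ j ∈ Ico 1 N, ζ ^ (k * j) / (1 - ζ ^ (-(j : ℤ))) =
      ∑ i ∈ range (k + 1), ζ ^ (i * j) + 1 / (ζ ^ j - 1) := by
    intro j hj
    obtain ⟨hj1, hjN⟩ := mem_Ico.mp hj
    simp only [zpow_neg, zpow_natCast, mul_comm _ j, pow_mul]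
    exact pow_div_one_sub_inv_eq_geom_sum_add (pow_ne_zero _ hζ0)
      (h.pow_ne_one_of_pos_of_lt (Nat.one_le_iff_ne_zero.mp hj1) hjN) k
  have hgeom : ∑ i ∈ range k, ∑ j ∈ Ico 1 N, ζ ^ ((i + 1) * j) = -k := by
    rw [sum_congr rfl fun i hi => h.sum_Ico_one_pow_mul_eq_neg_one i.succ_pos
      ((Nat.succ_le_of_lt (mem_range.mp hi)).trans_lt hk)]
    rw [sum_const, card_range, nsmul_eq_mul, mul_neg_one]
  have hzero : ∑ j ∈ Ico 1 N, ζ ^ (0 * j) = N - 1 := by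
    simp [Nat.cast_sub hN]
  rw [sum_congr rfl hterm, sum_add_distrib, sum_comm, sum_range_succ', hgeom, hzero]
  linear_combination h.two_mul_sum_Ico_one_div_pow_sub_one hN

end IsPrimitiveRoot

/-- `∑_{j=1}^{N-1} ω^{kj}/(1 - ω^{-j}) = (N-1-2k)/2` for `0 ≤ k ≤ N-1`. -/
theorem sum_omega_pow_div (N : ℕ) (hN : 2 ≤ N)
    (ω : ℂ) (hω : ω = Complex.exp (2 * Real.pi * Complex.I / N))
    (k : ℕ) (hk : k ≤ N - 1) :
    ∑ j ∈ Finset.Ico 1 N, ω ^ (k * j) / (1 - ω ^ (-(j : ℤ))) =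
      ((N : ℂ) - 1 - 2 * k) / 2 := by
  have hprim : IsPrimitiveRoot ω N := hω ▸ Complex.isPrimitiveRoot_exp N (by omega)
  rw [eq_div_iff two_ne_zero, mul_comm]
  exact hprim.two_mul_sum_pow_mul_div_one_sub_zpow_neg (by omega)
end

section
/- Let N ≥ 2, ω = exp(2πi/N), L ≥ 1, J ≥ 0, m an integer, and let P_a, P_b, P'_a, P'_b be integers with P_a + P_b + P'_a + P'_b ≡ −(L + 2J) (mod N). Let v_1, …, v_J be nonzero complex numbers and v'_j = v_j^{-1} ω^{-3-2m}. Then {v_j} satisfies the Bethe equations ((v_i + ω^{-1-m})/(v_i + ω^{-2-m}))^L = −ω^{−P_a−P_b} ∏_{j=1}^{J} (v_i − ω^{-1} v_j)/(v_i − ω v_j) for all i, if and only if {v'_j} satisfies the same system of equations with (P_a, P_b) replaced by (P'_a, P'_b). -/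
/-!
Put `c = ω ^ (-2 - m)`, so that `v' = ω c² / v`. This substitution sends the kinematic ratio
`(v + ω c) / (v + c)` to `ω` times its inverse and every scattering factor
`(vᵢ - ω⁻¹ vⱼ) / (vᵢ - ω vⱼ)` to `ω⁻²` times its inverse. The equation for `v'` is therefore the
inverse of the equation for `v`, up to the factor `ω ^ (L + 2J + P + P')`, which is `1` by the
congruence.
-/

open Finset

section Reciprocal

variable {K : Type*} [Field K]

theorem kinematic_ratio_reciprocal {ω c v : K} (hc : c ≠ 0) (hv : v ≠ 0) :
    (v⁻¹ * (ω * c * c) + ω * c) / (v⁻¹ * (ω * c * c) + c) = ω * ((v + ω * c) / (v + c))⁻¹ := by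
  have hnum : v⁻¹ * (ω * c * c) + ω * c = ω * c * v⁻¹ * (v + c) := by field_simp; ring
  have hden : v⁻¹ * (ω * c * c) + c = c * v⁻¹ * (v + ω * c) := by field_simp; ring
  rw [hnum, hden, mul_div_mul_comm, inv_div, mul_div_mul_right _ _ (inv_ne_zero hv),
    mul_div_cancel_right₀ _ hc]

theorem scattering_ratio_reciprocal {ω a u w : K} (hω : ω ≠ 0) (ha : a ≠ 0) (hu : u ≠ 0)
    (hw : w ≠ 0) :
    (u⁻¹ * a - ω⁻¹ * (w⁻¹ * a)) / (u⁻¹ * a - ω * (w⁻¹ * a)) =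
      ω ^ (-2 : ℤ) * ((u - ω⁻¹ * w) / (u - ω * w))⁻¹ := by
  have hnum : u⁻¹ * a - ω⁻¹ * (w⁻¹ * a) = -(ω⁻¹ * a * (u * w)⁻¹) * (u - ω * w) := by
    field_simp; ring
  have hden : u⁻¹ * a - ω * (w⁻¹ * a) = -(ω * a * (u * w)⁻¹) * (u - ω⁻¹ * w) := by
    field_simp; ring
  have hscal : -(ω⁻¹ * a * (u * w)⁻¹) / -(ω * a * (u * w)⁻¹) = ω ^ (-2 : ℤ) := by
    field_simp
  rw [hnum, hden, mul_div_mul_comm, hscal, inv_div]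

theorem eq_neg_zpow_mul_iff_inv {ω X Q : K} (hω : ω ≠ 0) {L n P P' : ℤ}
    (hP : ω ^ (L + n + P + P') = 1) :
    X = -ω ^ (-P) * Q ↔ ω ^ L * X⁻¹ = -ω ^ (-P') * (ω ^ (-n) * Q⁻¹) := by
  have hL : ω ^ L = ω ^ (-P' - n) * ω ^ (-P) := by
    calc ω ^ L = ω ^ (-P' - n + -P) * ω ^ (L + n + P + P') := by rw [← zpow_add₀ hω]; ring_nf
      _ = ω ^ (-P' - n) * ω ^ (-P) := by rw [hP, mul_one, zpow_add₀ hω]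
  have hrhs : -ω ^ (-P') * (ω ^ (-n) * Q⁻¹) =
      ω ^ (-P' - n) * (ω ^ (-P) * (-ω ^ (-P) * Q)⁻¹) := by
    rw [sub_eq_add_neg, zpow_add₀ hω]
    field_simp
  rw [hL, hrhs, mul_assoc, mul_right_inj' (zpow_ne_zero _ hω),
    mul_right_inj' (zpow_ne_zero _ hω), inv_inj]

theorem bethe_eq_iff_bethe_eq_reciprocal {ι : Type*} [Fintype ι] {ω c : K} (hω : ω ≠ 0)
    (hc : c ≠ 0) {L : ℕ} {P P' : ℤ} (hP : ω ^ ((L : ℤ) + 2 * Fintype.card ι + P + P') = 1)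
    {v v' : ι → K} (hv : ∀ j, v j ≠ 0) (hv' : ∀ j, v' j = (v j)⁻¹ * (ω * c * c)) (i : ι) :
    ((v i + ω * c) / (v i + c)) ^ L = -ω ^ (-P) * ∏ j, (v i - ω⁻¹ * v j) / (v i - ω * v j) ↔
      ((v' i + ω * c) / (v' i + c)) ^ L =
        -ω ^ (-P') * ∏ j, (v' i - ω⁻¹ * v' j) / (v' i - ω * v' j) := by
  have ha : ω * c * c ≠ 0 := by positivity
  simp only [hv', kinematic_ratio_reciprocal hc (hv i),
    scattering_ratio_reciprocal hω ha (hv i) (hv _), prod_mul_distrib, prod_const,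
    prod_inv_distrib, card_univ, mul_pow, inv_pow]
  rw [← zpow_natCast ω L, ← zpow_natCast (ω ^ (-2 : ℤ)), ← zpow_mul, neg_mul (2 : ℤ)]
  exact eq_neg_zpow_mul_iff_inv hω hP

end Reciprocal

theorem Complex.exp_two_pi_mul_I_div_pow_self (N : ℕ) :
    Complex.exp (2 * Real.pi * Complex.I / N) ^ N = 1 := by
  rcases eq_or_ne N 0 with rfl | hN
  · exact pow_zero _
  · exact (Complex.isPrimitiveRoot_exp N hN).pow_eq_one

theorem bethe_equation_reciprocal_equiv_general (N L J : ℕ)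
    (m Pa Pb Pa' Pb' : ℤ)
    (ω : ℂ) (hω : ω = Complex.exp (2 * Real.pi * Complex.I / N))
    (hcong : Pa + Pb + Pa' + Pb' ≡ -((L : ℤ) + 2 * (J : ℤ)) [ZMOD (N : ℤ)])
    (v : Fin J → ℂ) (hv : ∀ j, v j ≠ 0)
    (v' : Fin J → ℂ) (hv' : ∀ j, v' j = (v j)⁻¹ * ω ^ (-3 - 2 * m)) :
    ((∀ i, ((v i + ω ^ (-1 - m)) / (v i + ω ^ (-2 - m))) ^ L =
        -ω ^ (-(Pa + Pb)) * ∏ j, (v i - ω⁻¹ * v j) / (v i - ω * v j)) ↔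
     (∀ i, ((v' i + ω ^ (-1 - m)) / (v' i + ω ^ (-2 - m))) ^ L =
        -ω ^ (-(Pa' + Pb')) * ∏ j, (v' i - ω⁻¹ * v' j) / (v' i - ω * v' j))) := by
  have hω0 : ω ≠ 0 := hω ▸ Complex.exp_ne_zero _
  have hωc : ω ^ (-1 - m) = ω * ω ^ (-2 - m) := by rw [← zpow_one_add₀ hω0]; ring_nf
  have hωcc : ω ^ (-3 - 2 * m) = ω * ω ^ (-2 - m) * ω ^ (-2 - m) := by
    rw [← hωc, ← zpow_add₀ hω0]; ring_nf
  have hP : ω ^ ((L : ℤ) + 2 * Fintype.card (Fin J) + (Pa + Pb) + (Pa' + Pb')) = 1 := by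
    obtain ⟨q, hq⟩ := hcong.dvd
    rw [Fintype.card_fin, show (L : ℤ) + 2 * J + (Pa + Pb) + (Pa' + Pb') = N * -q by linarith,
      zpow_mul, zpow_natCast, hω, Complex.exp_two_pi_mul_I_div_pow_self, one_zpow]
  rw [hωc]
  exact forall_congr' <| bethe_eq_iff_bethe_eq_reciprocal hω0 (zpow_ne_zero _ hω0) hP hv
    fun j => hωcc ▸ hv' j

/-- `{v_j}` satisfies the superintegrable Bethe equations for `(P_a,P_b)`
iff the reciprocal roots `{v'_j}` satisfy them for `(P'_a,P'_b)`, provided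
`P_a+P_b+P'_a+P'_b ≡ -(L+2J) (mod N)`. -/
theorem bethe_equation_reciprocal_equiv (N L J : ℕ) (hN : 2 ≤ N) (hL : 1 ≤ L)
    (m Pa Pb Pa' Pb' : ℤ)
    (ω : ℂ) (hω : ω = Complex.exp (2 * Real.pi * Complex.I / N))
    (hcong : Pa + Pb + Pa' + Pb' ≡ -((L : ℤ) + 2 * (J : ℤ)) [ZMOD (N : ℤ)])
    (v : Fin J → ℂ) (hv : ∀ j, v j ≠ 0)
    (v' : Fin J → ℂ) (hv' : ∀ j, v' j = (v j)⁻¹ * ω ^ (-3 - 2 * m))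
    (hden1 : ∀ i, v i + ω ^ (-2 - m) ≠ 0)
    (hden2 : ∀ i j, v i ≠ ω * v j)
    (hden1' : ∀ i, v' i + ω ^ (-2 - m) ≠ 0)
    (hden2' : ∀ i j, v' i ≠ ω * v' j) :
    ((∀ i, ((v i + ω ^ (-1 - m)) / (v i + ω ^ (-2 - m))) ^ L =
        -ω ^ (-(Pa + Pb)) * ∏ j, (v i - ω⁻¹ * v j) / (v i - ω * v j)) ↔
     (∀ i, ((v' i + ω ^ (-1 - m)) / (v' i + ω ^ (-2 - m))) ^ L =
        -ω ^ (-(Pa' + Pb')) * ∏ j, (v' i - ω⁻¹ * v' j) / (v' i - ω * v' j))) :=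
  bethe_equation_reciprocal_equiv_general N L J m Pa Pb Pa' Pb' ω hω hcong v hv v' hv'
end

section
/- Let N ≥ 2, ω = exp(2πi/N), L ≥ 1, J ≥ 0, and m, P_a, P_b, P'_a, P'_b integers with P_a + P_b + P'_a + P'_b ≡ −(L + 2J) (mod N). Let F(t) = ∏_{j=1}^{J}(1 + ω v_j t) and F'(t) = ∏_{j=1}^{J}(1 + ω v'_j t) with v'_j = v_j^{-1}ω^{-3-2m}. Define τ(t) = ω^{−P_a}(1 − ω^{−m}t)^L F(t)/F(ωt) + ω^{P_b}(1 − ω^{1−m}t)^L F(ω²t)/F(ωt), and τ'(t) the analogous expression with (P'_a, P'_b, F'). Then τ'(ω^m t) = ω^{P'_b + P_a + L + J} (−t)^L τ(ω^{m−1} t^{−1}) for all t where both sides are defined. -/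
/-- The superintegrable `τ^{(2)}`-eigenvalue function attached to data `(F, P_a, P_b)`. -/
noncomputable def tauFun (ω : ℂ) (L : ℕ) (m Pa Pb : ℤ) (F : ℂ → ℂ) (t : ℂ) : ℂ :=
  ω ^ (-Pa) * (1 - ω ^ (-m) * t) ^ L * F t / F (ω * t) +
    ω ^ Pb * (1 - ω ^ (1 - m) * t) ^ L * F (ω ^ (2 : ℤ) * t) / F (ω * t)

/-!
Each factor of `F'` is reflected into a factor of `F`: with `v'_j = v_j⁻¹ ω^{-3-2m}`,
`1 + ω v'_j y = ω v'_j y · (1 + ω v_j x)` as soon as `ω² ω^{-3-2m} x y = 1`. Hence, with `s = ω^m t`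
and `u = ω^{m-1} t⁻¹`, the three values `F'(s), F'(ω s), F'(ω² s)` entering `τ'(s)` are
`F(ω² u), F(ω u), F(u)` times `D, ω^J D, ω^{2J} D` for one constant `D ≠ 0`. The linear factors of
`τ'(s)` reflect into those of `τ(u)` in the same way, the two summands swap, and the congruence on
`P_a + P_b + P'_a + P'_b` makes the phases agree because `ω` is a primitive `N`-th root of unity.
-/

theorem prod_one_add_inv_mul_eq_of_mul_eq_one {ι K : Type*} [Fintype ι] [Field K] (v : ι → K)
    (hv : ∀ i, v i ≠ 0) {ω c x y : K} (hxy : ω ^ 2 * c * x * y = 1) :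
    ∏ i, (1 + ω * ((v i)⁻¹ * c) * y) =
      (∏ i, (v i)⁻¹) * (ω * c * y) ^ Fintype.card ι * ∏ i, (1 + ω * v i * x) := by
  have factor (i : ι) :
      1 + ω * ((v i)⁻¹ * c) * y = (v i)⁻¹ * (ω * c * y) * (1 + ω * v i * x) := by
    linear_combination -((v i)⁻¹ * v i) * hxy - inv_mul_cancel₀ (hv i)
  rw [Finset.prod_congr rfl fun i _ => factor i, Finset.prod_mul_distrib, Finset.prod_mul_distrib,
    Finset.prod_const, Finset.card_univ]

theorem exists_dual_eq_zpow_mul {K : Type*} [Field K] {ω : K} (hω : ω ≠ 0) {J : ℕ}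
    (v : Fin J → K) (hv : ∀ j, v j ≠ 0) (m : ℤ) {F F' : K → K}
    (hF : ∀ t, F t = ∏ j, (1 + ω * v j * t))
    (hF' : ∀ t, F' t = ∏ j, (1 + ω * ((v j)⁻¹ * ω ^ (-3 - 2 * m)) * t)) {t : K} (ht : t ≠ 0) :
    ∃ D ≠ 0, ∀ k : ℤ,
      F' (ω ^ k * (ω ^ m * t)) = (ω ^ k) ^ J * D * F (ω ^ (2 - k) * (ω ^ (m - 1) * t⁻¹)) := by
  refine ⟨(∏ j, (v j)⁻¹) * (ω * ω ^ (-3 - 2 * m) * (ω ^ m * t)) ^ J,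
    mul_ne_zero (Finset.prod_ne_zero_iff.2 fun j _ => inv_ne_zero (hv j))
      (pow_ne_zero _ (by simp [hω, ht, zpow_ne_zero])), fun k => ?_⟩
  have hxy : ω ^ 2 * ω ^ (-3 - 2 * m) * (ω ^ (2 - k) * (ω ^ (m - 1) * t⁻¹)) *
      (ω ^ k * (ω ^ m * t)) = 1 := by
    simp only [zpow_sub₀ hω, zpow_neg, zpow_mul', zpow_ofNat]
    field_simp
  rw [hF', hF, prod_one_add_inv_mul_eq_of_mul_eq_one v hv hxy, Fintype.card_fin]
  ring

theorem tauFun_zpow_mul_eq_of_dual {ω : ℂ} (hω : ω ≠ 0) {L J : ℕ} {m Pa Pb Pa' Pb' : ℤ}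
    (hphase : ω ^ (Pa + Pb + Pa' + Pb' + L + 2 * J) = 1) {F F' : ℂ → ℂ} {t D : ℂ} (ht : t ≠ 0)
    (hD : D ≠ 0) (hFu : F (ω * (ω ^ (m - 1) * t⁻¹)) ≠ 0)
    (hF'F : ∀ k : ℤ,
      F' (ω ^ k * (ω ^ m * t)) = (ω ^ k) ^ J * D * F (ω ^ (2 - k) * (ω ^ (m - 1) * t⁻¹))) :
    tauFun ω L m Pa' Pb' F' (ω ^ m * t) =
      ω ^ (Pb' + Pa + (L : ℤ) + (J : ℤ)) * (-t) ^ L * tauFun ω L m Pa Pb F (ω ^ (m - 1) * t⁻¹) := by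
  set u := ω ^ (m - 1) * t⁻¹
  have h0 : F' (ω ^ m * t) = D * F (ω ^ (2 : ℤ) * u) := by simpa using hF'F 0
  have h1 : F' (ω * (ω ^ m * t)) = ω ^ J * D * F (ω * u) := by simpa using hF'F 1
  have h2 : F' (ω ^ (2 : ℤ) * (ω ^ m * t)) = ω ^ (2 * J) * D * F u := by
    simpa [pow_mul] using hF'F 2
  have p1 : 1 - ω ^ (-m) * (ω ^ m * t) = -t * (1 - ω ^ (1 - m) * u) := by
    simp only [u, zpow_sub₀ hω, zpow_neg, zpow_one]
    field_simp
    ring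
  have p2 : 1 - ω ^ (1 - m) * (ω ^ m * t) = ω * -t * (1 - ω ^ (-m) * u) := by
    simp only [u, zpow_sub₀ hω, zpow_neg, zpow_one]
    field_simp
    ring
  unfold tauFun
  rw [h0, h1, h2, p1, p2]
  generalize F u = A, F (ω ^ (2 : ℤ) * u) = C, 1 - ω ^ (1 - m) * u = X, 1 - ω ^ (-m) * u = Y
  simp only [zpow_add₀ hω, zpow_neg, zpow_mul, zpow_ofNat, zpow_natCast, mul_pow] at hphase ⊢
  field_simp
  linear_combination -(-t) ^ L * X ^ L * C * hphase

theorem tau_eigenvalue_reciprocal_general (N L J : ℕ) (hN : 2 ≤ N)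
    (m Pa Pb Pa' Pb' : ℤ)
    (ω : ℂ) (hω : ω = Complex.exp (2 * Real.pi * Complex.I / N))
    (hcong : Pa + Pb + Pa' + Pb' ≡ -((L : ℤ) + 2 * (J : ℤ)) [ZMOD (N : ℤ)])
    (v : Fin J → ℂ) (hv : ∀ j, v j ≠ 0)
    (F F' : ℂ → ℂ)
    (hF : ∀ t : ℂ, F t = ∏ j, (1 + ω * v j * t))
    (hF' : ∀ t : ℂ, F' t = ∏ j, (1 + ω * ((v j)⁻¹ * ω ^ (-3 - 2 * m)) * t)) :
    ∀ t : ℂ, t ≠ 0 → F' (ω * (ω ^ m * t)) ≠ 0 → F (ω * (ω ^ (m - 1) * t⁻¹)) ≠ 0 →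
      tauFun ω L m Pa' Pb' F' (ω ^ m * t) =
        ω ^ (Pb' + Pa + (L : ℤ) + (J : ℤ)) * (-t) ^ L *
          tauFun ω L m Pa Pb F (ω ^ (m - 1) * t⁻¹) := by
  intro t ht _ hFu
  have hprim : IsPrimitiveRoot ω N := hω ▸ Complex.isPrimitiveRoot_exp N (by omega)
  have hω0 : ω ≠ 0 := hprim.ne_zero (by omega)
  have hphase : ω ^ (Pa + Pb + Pa' + Pb' + L + 2 * J) = 1 :=
    (hprim.zpow_eq_one_iff_dvd _).2 (by convert hcong.symm.dvd using 1; ring)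
  obtain ⟨D, hD, hF'F⟩ := exists_dual_eq_zpow_mul hω0 v hv m hF hF' ht
  exact tauFun_zpow_mul_eq_of_dual hω0 hphase ht hD hFu hF'F

/-- `τ'(ω^m t) = ω^{P'_b+P_a+L+J} (−t)^L τ(ω^{m−1} t^{−1})`. -/
theorem tau_eigenvalue_reciprocal (N L J : ℕ) (hN : 2 ≤ N) (hL : 1 ≤ L)
    (m Pa Pb Pa' Pb' : ℤ)
    (ω : ℂ) (hω : ω = Complex.exp (2 * Real.pi * Complex.I / N))
    (hcong : Pa + Pb + Pa' + Pb' ≡ -((L : ℤ) + 2 * (J : ℤ)) [ZMOD (N : ℤ)])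
    (v : Fin J → ℂ) (hv : ∀ j, v j ≠ 0)
    (F F' : ℂ → ℂ)
    (hF : ∀ t : ℂ, F t = ∏ j, (1 + ω * v j * t))
    (hF' : ∀ t : ℂ, F' t = ∏ j, (1 + ω * ((v j)⁻¹ * ω ^ (-3 - 2 * m)) * t)) :
    ∀ t : ℂ, t ≠ 0 → F' (ω * (ω ^ m * t)) ≠ 0 → F (ω * (ω ^ (m - 1) * t⁻¹)) ≠ 0 →
      tauFun ω L m Pa' Pb' F' (ω ^ m * t) =
        ω ^ (Pb' + Pa + (L : ℤ) + (J : ℤ)) * (-t) ^ L *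
          tauFun ω L m Pa Pb F (ω ^ (m - 1) * t⁻¹) :=
  tau_eigenvalue_reciprocal_general N L J hN m Pa Pb Pa' Pb' ω hω hcong v hv F F' hF hF'
end
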